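/- arXiv:2211.11204 — 7 statements merged into one kernel-verified Lean document; each statement's English description precedes it below -/
import Mathlib

section
/- Let G be a finite group acting transitively on a finite set X, x₀ ∈ X, S ⊆ X with x₀ ∈ S, 𝒮 = ζ_{x₀}⁻¹(S), G_𝒮 its right stabilizer, and X_S = G_𝒮·x₀. Then there exist γ₁,…,γ_ℓ ∈ G such that S is the disjoint union of γ₁·X_S, …, γ_ℓ·X_S. In particular |X_S| divides |S|, and |S| = |X_S| if and only if S = γ·X_S for some γ ∈ G. -/
open Pointwise

lemma ncard_iUnion_fin {X : Type*} [Finite X] :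
    ∀ (ℓ : ℕ) (t : Fin ℓ → Set X),
      (∀ i j, i ≠ j → t i ∩ t j = ∅) → (⋃ i, t i).ncard = ∑ i, (t i).ncard := by
  intro ℓ
  induction ℓ with
  | zero => intro t _; simp
  | succ n ih =>
    intro t ht
    have hU : (⋃ i, t i) = t 0 ∪ ⋃ i : Fin n, t i.succ := by
      ext x
      simp only [Set.mem_iUnion, Set.mem_union]
      constructor
      · rintro ⟨i, hi⟩
        rcases Fin.eq_zero_or_eq_succ i with rfl | ⟨j, rfl⟩
        · exact Or.inl hi
        · exact Or.inr ⟨j, hi⟩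
      · rintro (h | ⟨j, hj⟩)
        · exact ⟨0, h⟩
        · exact ⟨j.succ, hj⟩
    have hd : Disjoint (t 0) (⋃ i : Fin n, t i.succ) := by
      simp only [Set.disjoint_iUnion_right]
      intro i
      rw [Set.disjoint_iff_inter_eq_empty]
      exact ht 0 i.succ (Fin.succ_ne_zero i).symm
    rw [hU, Set.ncard_union_eq hd (Set.toFinite _) (Set.toFinite _),
      ih (fun i => t i.succ) (fun i j hij => ht i.succ j.succ (by simpa using hij)),
      Fin.sum_univ_succ]

theorem stmt4 {G X : Type*} [Group G] [Fintype G] [MulAction G X] [Fintype X]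
    [MulAction.IsPretransitive G X] (x₀ : X) (S : Set X) (hx₀ : x₀ ∈ S) :
    let 𝒮 : Set G := {α | α • x₀ ∈ S}
    let GS : Set G := {α | (fun β => β * α) '' 𝒮 = 𝒮}
    let XS : Set X := (fun α : G => α • x₀) '' GS
    (∃ (ℓ : ℕ) (γ : Fin ℓ → G),
        S = ⋃ i, γ i • XS ∧ ∀ i j, i ≠ j → (γ i • XS) ∩ (γ j • XS) = ∅) ∧
      XS.ncard ∣ S.ncard ∧ (S.ncard = XS.ncard ↔ ∃ γ : G, S = γ • XS) := by
  intro 𝒮 GS XS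
  classical
  have h1S : (1 : G) ∈ 𝒮 := by simpa [𝒮] using hx₀
  -- multiplying an element of 𝒮 on the right by an element of GS stays in 𝒮
  have hmul𝒮 : ∀ α ∈ 𝒮, ∀ β ∈ GS, α * β ∈ 𝒮 := by
    intro α hα β hβ
    have : (fun g => g * β) '' 𝒮 = 𝒮 := hβ
    exact this ▸ Set.mem_image_of_mem _ hα
  have hGSsub : GS ⊆ 𝒮 := by
    intro β hβ
    simpa using hmul𝒮 1 h1S β hβ
  -- stabilizer of x₀ is contained in GS
  have hstab : ∀ h : G, h • x₀ = x₀ → h ∈ GS := by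
    intro h hh
    have hinv : h⁻¹ • x₀ = x₀ := inv_smul_eq_iff.mpr hh.symm
    ext β
    constructor
    · rintro ⟨α, hα, rfl⟩
      show (α * h) • x₀ ∈ S
      rw [mul_smul, hh]; exact hα
    · intro hβ
      refine ⟨β * h⁻¹, ?_, by simp [mul_assoc]⟩
      show (β * h⁻¹) • x₀ ∈ S
      rw [mul_smul, hinv]; exact hβ
  -- GS is closed under multiplication and inverse
  have hmulGS : ∀ α ∈ GS, ∀ β ∈ GS, α * β ∈ GS := by
    intro α hα β hβ
    show (fun g => g * (α * β)) '' 𝒮 = 𝒮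
    have : (fun g => g * (α * β)) '' 𝒮 =
        (fun g => g * β) '' ((fun g => g * α) '' 𝒮) := by
      rw [Set.image_image]
      simp [mul_assoc]
    rw [this, (hα : (fun g => g * α) '' 𝒮 = 𝒮), (hβ : (fun g => g * β) '' 𝒮 = 𝒮)]
  have hinvGS : ∀ α ∈ GS, α⁻¹ ∈ GS := by
    intro α hα
    show (fun g => g * α⁻¹) '' 𝒮 = 𝒮
    conv_lhs => rw [← (hα : (fun g => g * α) '' 𝒮 = 𝒮)]
    rw [Set.image_image]
    simp
  have h1GS : (1 : G) ∈ GS := hstab 1 (one_smul _ _)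
  have hx₀XS : x₀ ∈ XS := ⟨1, h1GS, one_smul _ _⟩
  -- GS translates preserve XS
  have hXSsmul : ∀ σ ∈ GS, σ • XS = XS := by
    intro σ hσ
    ext x
    constructor
    · rintro ⟨_, ⟨α, hα, rfl⟩, rfl⟩
      refine ⟨σ * α, hmulGS σ hσ α hα, ?_⟩
      show (σ * α) • x₀ = σ • α • x₀
      rw [mul_smul]
    · rintro ⟨α, hα, rfl⟩
      refine ⟨(σ⁻¹ * α) • x₀, ⟨σ⁻¹ * α, hmulGS _ (hinvGS σ hσ) _ hα, rfl⟩, ?_⟩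
      show σ • (σ⁻¹ * α) • x₀ = α • x₀
      rw [← mul_smul, mul_inv_cancel_left]
  -- translates of XS are equal or disjoint
  have hcoset : ∀ γ δ : G, ((γ • XS) ∩ (δ • XS)).Nonempty → γ • XS = δ • XS := by
    rintro γ δ ⟨x, ⟨a, ⟨α, hα, rfl⟩, hx1⟩, b, ⟨β, hβ, rfl⟩, hx2⟩
    have hx1' : γ • α • x₀ = x := hx1
    have hx2' : δ • β • x₀ = x := hx2
    have hxx : (γ * α) • x₀ = (δ * β) • x₀ := by
      rw [mul_smul, mul_smul, hx1', hx2']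
    have hfix : ((δ * β)⁻¹ * (γ * α)) • x₀ = x₀ := by
      rw [mul_smul, hxx, inv_smul_smul]
    have hm : δ⁻¹ * γ ∈ GS := by
      have heq : δ⁻¹ * γ = β * ((δ * β)⁻¹ * (γ * α)) * α⁻¹ := by group
      rw [heq]
      exact hmulGS _ (hmulGS β hβ _ (hstab _ hfix)) _ (hinvGS α hα)
    calc γ • XS = δ • ((δ⁻¹ * γ) • XS) := by rw [smul_smul, mul_inv_cancel_left]
      _ = δ • XS := by rw [hXSsmul _ hm]
  -- translates by elements of 𝒮 land inside S
  have hsubS : ∀ γ ∈ 𝒮, γ • XS ⊆ S := by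
    rintro γ hγ x ⟨_, ⟨α, hα, rfl⟩, rfl⟩
    show γ • α • x₀ ∈ S
    rw [← mul_smul]
    exact hmul𝒮 γ hγ α hα
  -- the set of translates covering S
  set T : Set (Set X) := {t | ∃ g ∈ 𝒮, t = g • XS} with hTdef
  have Tfin : T.Finite := Set.toFinite T
  obtain ⟨ℓ, hℓ⟩ : ∃ n : ℕ, n = Tfin.toFinset.card := ⟨_, rfl⟩
  let e : Tfin.toFinset ≃ Fin ℓ := Tfin.toFinset.equivFin.trans (finCongr hℓ.symm)
  have hTi : ∀ i : Fin ℓ, ∃ g ∈ 𝒮, ((e.symm i : Set X)) = g • XS := by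
    intro i
    have := (e.symm i).2
    rw [Set.Finite.mem_toFinset] at this
    exact this
  choose γ hγ𝒮 hγeq using hTi
  have hcover : S = ⋃ i, γ i • XS := by
    ext s
    constructor
    · intro hs
      obtain ⟨g, hg⟩ := MulAction.exists_smul_eq G x₀ s
      have hg𝒮 : g ∈ 𝒮 := by show g • x₀ ∈ S; rw [hg]; exact hs
      have hmem : g • XS ∈ Tfin.toFinset := by
        rw [Set.Finite.mem_toFinset]; exact ⟨g, hg𝒮, rfl⟩
      refine Set.mem_iUnion.mpr ⟨e ⟨g • XS, hmem⟩, ?_⟩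
      have : ((e.symm (e ⟨g • XS, hmem⟩) : Set X)) = g • XS := by
        rw [Equiv.symm_apply_apply]
      rw [← hγeq (e ⟨g • XS, hmem⟩), this]
      exact ⟨x₀, hx₀XS, hg⟩
    · intro hs
      obtain ⟨i, hi⟩ := Set.mem_iUnion.mp hs
      exact hsubS (γ i) (hγ𝒮 i) hi
  have hdisj : ∀ i j : Fin ℓ, i ≠ j → (γ i • XS) ∩ (γ j • XS) = ∅ := by
    intro i j hij
    by_contra h
    have hne := Set.nonempty_iff_ne_empty.mpr h
    have heq := hcoset _ _ hne
    apply hij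
    have : e.symm i = e.symm j := Subtype.ext (by rw [hγeq i, hγeq j, heq])
    exact e.symm.injective this
  have hcard : S.ncard = ℓ * XS.ncard := by
    rw [hcover, ncard_iUnion_fin ℓ _ hdisj]
    simp [Set.ncard_smul_set, Finset.sum_const, mul_comm]
  refine ⟨⟨ℓ, γ, hcover, hdisj⟩, ⟨ℓ, by rw [hcard, mul_comm]⟩, ?_⟩
  constructor
  · intro hSX
    have hpos : 0 < XS.ncard := (Set.ncard_pos (Set.toFinite _)).mpr ⟨x₀, hx₀XS⟩
    have hℓ1 : ℓ = 1 := by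
      have : ℓ * XS.ncard = 1 * XS.ncard := by rw [one_mul, ← hcard, hSX]
      exact Nat.eq_of_mul_eq_mul_right hpos this
    have hss : ∀ a b : Fin ℓ, a = b := fun a b => Fin.ext (by omega)
    have i0 : Fin ℓ := ⟨0, by omega⟩
    refine ⟨γ i0, ?_⟩
    apply Set.Subset.antisymm
    · intro s hs
      obtain ⟨j, hj⟩ := Set.mem_iUnion.mp (hcover ▸ hs)
      exact hss j i0 ▸ hj
    · exact hsubS (γ i0) (hγ𝒮 i0)
  · rintro ⟨g, hSg⟩
    rw [hSg]
    exact Set.ncard_smul_set g XS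
end

section
/- Let G be a finite group acting transitively on a finite set X, x₀ ∈ X, S ⊆ X with x₀ ∈ S, and 𝒮 = ζ_{x₀}⁻¹(S). Then X_S = ⋂_{α ∈ 𝒮} α⁻¹·S, where X_S = G_𝒮·x₀. -/
open Pointwise

theorem stmt5 {G X : Type*} [Group G] [Fintype G] [MulAction G X] [Fintype X]
    [MulAction.IsPretransitive G X] (x₀ : X) (S : Set X) (hx₀ : x₀ ∈ S) :
    let 𝒮 : Set G := {α | α • x₀ ∈ S}
    let GS : Set G := {α | (fun β => β * α) '' 𝒮 = 𝒮}
    let XS : Set X := (fun α : G => α • x₀) '' GS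
    XS = ⋂ α ∈ 𝒮, α⁻¹ • S := by
  intro 𝒮 GS XS
  ext x
  simp only [XS, GS, 𝒮, Set.mem_iInter, Set.mem_image, Set.mem_setOf_eq]
  constructor
  · rintro ⟨α, hα, rfl⟩ β hβ
    rw [Set.mem_inv_smul_set_iff, smul_smul]
    have : β * α ∈ (fun β => β * α) '' {α | α • x₀ ∈ S} := ⟨β, hβ, rfl⟩
    rw [hα] at this
    exact this
  · intro hx
    obtain ⟨α, rfl⟩ := MulAction.exists_smul_eq G x₀ x
    refine ⟨α, ?_, rfl⟩
    have hsub : (fun β => β * α) '' 𝒮 ⊆ 𝒮 := by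
      rintro _ ⟨β, hβ, rfl⟩
      have := hx β hβ
      rwa [Set.mem_inv_smul_set_iff, smul_smul] at this
    refine Set.eq_of_subset_of_ncard_le hsub ?_ (Set.toFinite _)
    rw [Set.ncard_image_of_injective _ (fun a b h => mul_right_cancel h)]
end

section
/- Let G be a finite group acting transitively on a finite set X, x₀ ∈ X, and let S ⊆ X be a subset with x₀ ∈ S and S ≠ X. Set S' = X − S, 𝒮 = ζ_{x₀}⁻¹(S), 𝒮' = ζ_{x₀}⁻¹(S'), and X_S = G_𝒮·x₀. Then X is the disjoint union of 𝒮'⁻¹·S and X_S; that is, X = (𝒮'⁻¹·S) ∪ X_S and (𝒮'⁻¹·S) ∩ X_S = ∅. -/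
open Pointwise

theorem stmt8 {G X : Type*} [Group G] [Fintype G] [MulAction G X] [Fintype X]
    [MulAction.IsPretransitive G X] (x₀ : X) (S : Set X) (hx₀ : x₀ ∈ S)
    (hS : S ≠ Set.univ) :
    let 𝒮 : Set G := {α | α • x₀ ∈ S}
    let 𝒮' : Set G := {α | α • x₀ ∉ S}
    let GS : Set G := {α | (fun β => β * α) '' 𝒮 = 𝒮}
    let XS : Set X := (fun α : G => α • x₀) '' GS
    Set.image2 (· • ·) 𝒮'⁻¹ S ∪ XS = Set.univ ∧
      Set.image2 (· • ·) 𝒮'⁻¹ S ∩ XS = ∅ := by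
  intro 𝒮 𝒮' GS XS
  constructor
  · ext x
    simp only [Set.mem_univ, iff_true, Set.mem_union]
    obtain ⟨τ, hτ⟩ := MulAction.exists_smul_eq G x₀ x
    by_cases h : ∀ β : G, β • x ∈ S → β • x₀ ∈ S
    · right
      refine ⟨τ, ?_, hτ⟩
      have hA : {β : G | β • x ∈ S} = 𝒮 := by
        have heq : {β : G | β • x ∈ S} = (fun β => β * τ⁻¹) '' 𝒮 := by
          ext δ
          simp only [Set.mem_setOf_eq, Set.mem_image]
          constructor
          · intro hδ
            exact ⟨δ * τ, by simpa [𝒮, ← hτ, mul_smul] using hδ, by group⟩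
          · rintro ⟨β, hβ, rfl⟩
            simpa [𝒮, ← hτ, mul_smul] using hβ
        have hcard : 𝒮.ncard ≤ {β : G | β • x ∈ S}.ncard := by
          rw [heq, Set.ncard_image_of_injective _ (mul_left_injective τ⁻¹)]
        exact Set.eq_of_subset_of_ncard_le (fun β hβ => h β hβ) hcard (Set.toFinite _)
      show (fun β => β * τ) '' 𝒮 = 𝒮
      ext δ
      simp only [Set.mem_image]
      constructor
      · rintro ⟨β, hβ, rfl⟩
        have hβx : β ∈ {β : G | β • x ∈ S} := hA ▸ hβ
        show (β * τ) • x₀ ∈ S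
        rwa [mul_smul, hτ]
      · intro hδ
        refine ⟨δ * τ⁻¹, ?_, by group⟩
        rw [← hA]
        show (δ * τ⁻¹) • x ∈ S
        rw [← hτ, mul_smul, inv_smul_smul]
        exact hδ
    · left
      push_neg at h
      obtain ⟨β, hβx, hβ0⟩ := h
      exact ⟨β⁻¹, by simpa [𝒮', Set.mem_inv] using hβ0, β • x, hβx, by simp⟩
  · ext x
    simp only [Set.mem_inter_iff, Set.mem_empty_iff_false, iff_false]
    rintro ⟨h1, h2⟩
    obtain ⟨a, ha, y, hy, rfl⟩ := h1
    obtain ⟨γ, hγ, hγx⟩ := h2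
    rw [Set.mem_inv] at ha
    have hδ : a⁻¹ • (a • y) ∈ S := by simpa using hy
    -- a⁻¹ • y... show a⁻¹ ∈ 𝒮' gives contradiction with a⁻¹ • x₀ ∈ S
    simp only at hγx
    have key : (a⁻¹ * γ) ∈ 𝒮 := by
      show (a⁻¹ * γ) • x₀ ∈ S
      rw [mul_smul, hγx]
      simpa using hy
    have : a⁻¹ * γ ∈ (fun β => β * γ) '' 𝒮 := hγ.symm ▸ key
    obtain ⟨β, hβ, hβeq⟩ := this
    have : β = a⁻¹ := mul_right_cancel hβeq
    rw [this] at hβ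
    exact ha hβ
end

section
/- Let F be any field, G any finite group, X a finite transitive G-set, and f a nonzero function in F^X, identified with the element f = Σ_{x∈X} f(x)·x of the permutation module F X. Then |supp(f)| · dim_F (F G · f) ≥ |X| + |supp(f)| − |X_{supp(f)}|, where supp(f) = {x ∈ X : f(x) ≠ 0}, F G · f is the F G-submodule of F X generated by f, and X_{supp(f)} is the block of X associated with supp(f). -/
/-!
Choose a basis `B` of `F G · f` made of translates of `f`, with `f ∈ B`. The supports of the
`dim - 1` other members of `B` cover `X` except for the set `A` of their common zeros, so
`|X| ≤ (dim - 1) · |S| + |A|`. On `A` every vector of `F G · f` is a scalar multiple of `f`;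
hence `A ⊆ S` and any two points of `A` lie in exactly the same translates of `S`, which puts a
translate of `A` inside the block `X_S`.
-/

open Pointwise

open Finset Submodule Module

section CommonZeros

variable {X F : Type*} [Fintype X]

open scoped Classical in
noncomputable def commonZeros [Zero F] (B : Finset (X →₀ F)) : Finset X :=
  {x | ∀ g ∈ B, g x = 0}

theorem mem_commonZeros [Zero F] {B : Finset (X →₀ F)} {x : X} :
    x ∈ commonZeros B ↔ ∀ g ∈ B, g x = 0 := by
  simp [commonZeros]

theorem card_le_card_mul_add_card_commonZeros [Zero F] (B : Finset (X →₀ F)) {s : ℕ}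
    (hs : ∀ g ∈ B, #g.support ≤ s) :
    Fintype.card X ≤ #B * s + #(commonZeros B) := by
  classical
  have hcover : (univ : Finset X) ⊆ B.biUnion Finsupp.support ∪ commonZeros B := by
    intro x _
    by_cases hx : x ∈ commonZeros B
    · exact mem_union_right _ hx
    · obtain ⟨g, hg, hgx⟩ : ∃ g ∈ B, g x ≠ 0 := by simpa [mem_commonZeros] using hx
      exact mem_union_left _ (mem_biUnion.2 ⟨g, hg, Finsupp.mem_support_iff.2 hgx⟩)
  calc Fintype.card X ≤ #(B.biUnion Finsupp.support ∪ commonZeros B) := card_le_card hcover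
    _ ≤ #(B.biUnion Finsupp.support) + #(commonZeros B) := card_union_le _ _
    _ ≤ #B * s + #(commonZeros B) := by gcongr; exact card_biUnion_le_card_mul _ _ _ hs

theorem exists_eq_mul_on_commonZeros_of_mem_span_insert [Semiring F] {B : Finset (X →₀ F)}
    {f w : X →₀ F} (hw : w ∈ span F (insert f (B : Set (X →₀ F)))) :
    ∃ c : F, ∀ x ∈ commonZeros B, w x = c * f x := by
  obtain ⟨c, z, hz, rfl⟩ := mem_span_insert.1 hw
  refine ⟨c, fun x hx => ?_⟩
  have hzx : z x = 0 := LinearMap.mem_ker.1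
    (span_le.2 (fun g hg => mem_commonZeros.1 hx g hg) hz : z ∈ LinearMap.ker (Finsupp.lapply x))
  simp [hzx]

theorem exists_card_add_le_finrank_mul_add_card [Field F] {T : Set (X →₀ F)} {f : X →₀ F}
    (hfT : f ∈ T) (hf : f ≠ 0) {s : ℕ} (hs : ∀ g ∈ T, #g.support ≤ s) :
    ∃ A : Finset X, Fintype.card X + s ≤ finrank F (span F T) * s + #A ∧
      ∀ w ∈ span F T, ∃ c : F, ∀ x ∈ A, w x = c * f x := by
  classical
  obtain ⟨b, hbT, hfb, hTb, hb⟩ := exists_linearIndepOn_id_extension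
    (LinearIndepOn.singleton (R := F) hf) (Set.singleton_subset_iff.2 hfT)
  lift b to Finset (X →₀ F) using LinearIndependent.setFinite hb
  have hfB : f ∈ b := hfb rfl
  have hspan : span F T = span F b := le_antisymm (span_le.2 hTb) (span_mono hbT)
  refine ⟨commonZeros (b.erase f), ?_, fun w hw => ?_⟩
  · have hcount := card_le_card_mul_add_card_commonZeros (b.erase f)
      (fun g hg => hs g (hbT (mem_of_mem_erase hg)))
    rw [hspan, finrank_span_finset_eq_card hb, ← card_erase_add_one hfB]
    linarith
  · apply exists_eq_mul_on_commonZeros_of_mem_span_insert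
    rwa [coe_erase, Set.insert_sdiff_singleton, Set.insert_eq_of_mem hfB, ← hspan]

end CommonZeros

section Translates

variable {G X F : Type*} [Group G] [MulAction G X]

theorem coeff_ofMulAction_ofCoeff [Semiring F] (α : G) (f : X →₀ F) :
    (Representation.ofMulAction F G X α (MonoidAlgebra.ofCoeff f)).coeff = f.mapDomain (α • ·) :=
  rfl

theorem card_support_coeff_ofMulAction_ofCoeff [Semiring F] (α : G) (f : X →₀ F) :
    #(Representation.ofMulAction F G X α (MonoidAlgebra.ofCoeff f)).coeff.support =
      #f.support := by
  classical
  rw [coeff_ofMulAction_ofCoeff, Finsupp.mapDomain_support_of_injective (MulAction.injective α),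
    card_image_of_injective _ (MulAction.injective α)]

variable (G) in
def blockOf (S : Set X) (x₀ : X) : Set X :=
  (fun α : G => α • x₀) '' {δ | (fun β => β * δ) '' {α | α • x₀ ∈ S} = {α | α • x₀ ∈ S}}

theorem mem_blockOf_of_forall_smul_mem_iff [MulAction.IsPretransitive G X] {S : Set X}
    {x₀ x : X} (h : ∀ γ : G, γ • x ∈ S ↔ γ • x₀ ∈ S) : x ∈ blockOf G S x₀ := by
  obtain ⟨δ, rfl⟩ := MulAction.exists_smul_eq G x₀ x
  refine ⟨δ, ?_, rfl⟩
  ext γ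
  simp only [Set.image_mul_right, Set.mem_preimage, Set.mem_ofPred_eq]
  rw [← h, smul_smul, inv_mul_cancel_right]

theorem card_le_ncard_blockOf [MulAction.IsPretransitive G X] [Finite X] [MulZeroClass F]
    [NoZeroDivisors F] {f : X →₀ F} {x₀ : X} (hx₀ : f x₀ ≠ 0) {A : Finset X}
    (hA : ∀ α : G, ∃ c : F, ∀ x ∈ A, f (α • x) = c * f x) :
    #A ≤ (blockOf G f.support x₀).ncard := by
  have hAf : ∀ x ∈ A, f x ≠ 0 := by
    intro x hx hfx
    obtain ⟨α, hα⟩ := MulAction.exists_smul_eq G x x₀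
    obtain ⟨c, hc⟩ := hA α
    exact hx₀ (by rw [← hα, hc x hx, hfx, mul_zero])
  have hsame : ∀ a ∈ A, ∀ y ∈ A, ∀ γ : G, f (γ • y) ≠ 0 ↔ f (γ • a) ≠ 0 := by
    intro a ha y hy γ
    obtain ⟨c, hc⟩ := hA γ
    simp [hc y hy, hc a ha, hAf y hy, hAf a ha]
  rcases A.eq_empty_or_nonempty with rfl | ⟨a, ha⟩
  · simp
  obtain ⟨β, hβ⟩ := MulAction.exists_smul_eq G a x₀
  rw [← Set.ncard_coe_finset]
  refine Set.ncard_le_ncard_of_injOn (β • ·) (fun y hy => ?_) (MulAction.injective β).injOn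
  refine mem_blockOf_of_forall_smul_mem_iff fun γ => ?_
  simpa only [← hβ, smul_smul, Finset.mem_coe, Finsupp.mem_support_iff] using
    hsame a ha y hy (γ * β)

end Translates

theorem stmt9_general {G X F : Type*} [Group G] [MulAction G X] [Fintype X]
    [MulAction.IsPretransitive G X] [Field F]
    (f : X →₀ F) (x₀ : X) (hx₀ : f x₀ ≠ 0) :
    let S : Set X := ↑f.support
    let 𝒮 : Set G := {α | α • x₀ ∈ S}
    let GS : Set G := {α | (fun β => β * α) '' 𝒮 = 𝒮}
    let XS : Set X := (fun α : G => α • x₀) '' GS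
    f.support.card *
        Module.finrank F (Submodule.span F
          (Set.range fun α : G => (Representation.ofMulAction F G X α (MonoidAlgebra.ofCoeff f)).coeff)) +
      XS.ncard ≥ Fintype.card X + f.support.card := by
  intro S 𝒮 GS XS
  set T := Set.range fun α : G =>
    (Representation.ofMulAction F G X α (MonoidAlgebra.ofCoeff f)).coeff
  have hfT : f ∈ T := ⟨1, by simp⟩
  obtain ⟨A, hcard, hA⟩ := exists_card_add_le_finrank_mul_add_card hfT
    (ne_of_apply_ne (· x₀) hx₀) (s := #f.support)
    (by rintro _ ⟨α, rfl⟩; exact (card_support_coeff_ofMulAction_ofCoeff α f).le)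
  have hAXS : #A ≤ XS.ncard := card_le_ncard_blockOf hx₀ fun α => by
    obtain ⟨c, hc⟩ := hA _ (subset_span ⟨α⁻¹, rfl⟩)
    exact ⟨c, fun x hx => by simpa using hc x hx⟩
  rw [mul_comm]
  omega

theorem stmt9 {G X F : Type*} [Group G] [Fintype G] [MulAction G X] [Fintype X]
    [MulAction.IsPretransitive G X] [Field F]
    (f : X →₀ F) (hf : f ≠ 0) (x₀ : X) (hx₀ : f x₀ ≠ 0) :
    let S : Set X := ↑f.support
    let 𝒮 : Set G := {α | α • x₀ ∈ S}
    let GS : Set G := {α | (fun β => β * α) '' 𝒮 = 𝒮}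
    let XS : Set X := (fun α : G => α • x₀) '' GS
    f.support.card *
        Module.finrank F (Submodule.span F
          (Set.range fun α : G => (Representation.ofMulAction F G X α (MonoidAlgebra.ofCoeff f)).coeff)) +
      XS.ncard ≥ Fintype.card X + f.support.card :=
  stmt9_general f x₀ hx₀
end

section
/- Let F be any field, G any finite group, X a finite transitive G-set, and f a nonzero element of the permutation module F X. Then |supp(f)| · dim_F (F G · f) ≥ |X|. -/
/-!
Choose a basis of `F G · f` among the translates `g • f`. Every translate has the same support
size as `f`, and every element of the span is supported on the union of the supports of the
basis vectors. By transitivity the translates of `f` reach every point of `X`, so this union is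
all of `X`, and it has at most `dim (F G · f) · |supp f|` elements.
-/

open Finset Module Submodule

namespace Finsupp

theorem card_biUnion_support_le_finrank_mul {α F : Type*} [DecidableEq α] [DivisionRing F]
    (s : Finset (α →₀ F)) {k : ℕ} (hk : ∀ v ∈ s, #v.support ≤ k) :
    #(s.biUnion support) ≤ finrank F (span F (s : Set (α →₀ F))) * k := by
  obtain ⟨t, hts, hspan, hli⟩ := exists_linearIndependent F (s : Set (α →₀ F))
  obtain ⟨u, rfl⟩ := (s.finite_toSet.subset hts).exists_finset_coe
  have hus : u ⊆ s := mod_cast hts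
  have hcover : s.biUnion support ⊆ u.biUnion support := by
    intro x hx
    obtain ⟨v, hv, hxv⟩ := mem_biUnion.1 hx
    have hvu : v ∈ span F (u : Set (α →₀ F)) := by
      rw [hspan]; exact subset_span hv
    simpa using (mem_supported F v).1 (span_le_supported_biUnion_support F _ hvu) hxv
  calc #(s.biUnion support) ≤ #(u.biUnion support) := card_le_card hcover
    _ ≤ #u * k := card_biUnion_le_card_mul u _ k fun v hv => hk v (hus hv)
    _ = finrank F (span F (s : Set (α →₀ F))) * k := by
      rw [← hspan, finrank_span_finset_eq_card hli]

theorem card_support_mapDomain_of_injective {α β M : Type*} [AddCommMonoid M] {e : α → β}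
    (he : Function.Injective e) (f : α →₀ M) : #(f.mapDomain e).support = #f.support := by
  classical
  rw [mapDomain_support_of_injective he, card_image_of_injective _ he]

theorem mapDomain_smul_apply {G X M : Type*} [Group G] [MulAction G X] [AddCommMonoid M]
    (f : X →₀ M) (g : G) (x : X) : f.mapDomain (g • ·) x = f (g⁻¹ • x) := by
  rw [← mapDomain_apply (MulAction.injective g) f (g⁻¹ • x), smul_inv_smul]

theorem exists_mem_support_mapDomain_smul {G X M : Type*} [Group G] [MulAction G X]
    [MulAction.IsPretransitive G X] [AddCommMonoid M] {f : X →₀ M} (hf : f ≠ 0) (x : X) :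
    ∃ g : G, x ∈ (f.mapDomain (g • ·)).support := by
  obtain ⟨y, hy⟩ := support_nonempty_iff.2 hf
  obtain ⟨g, rfl⟩ := MulAction.exists_smul_eq G y x
  exact ⟨g, by simpa [mapDomain_smul_apply] using hy⟩

end Finsupp

theorem Representation.coeffLinearEquiv_ofMulAction_apply {G X F : Type*} [Monoid G]
    [MulAction G X] [Semiring F] (g : G) (f : X →₀ F) :
    MonoidAlgebra.coeffLinearEquiv F
        (ofMulAction F G X g ((MonoidAlgebra.coeffLinearEquiv F).symm f)) = f.mapDomain (g • ·) := by
  simp [ofMulAction_def]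

theorem stmt10 {G X F : Type*} [Group G] [Fintype G] [MulAction G X] [Fintype X]
    [MulAction.IsPretransitive G X] [Field F]
    (f : X →₀ F) (hf : f ≠ 0) :
    f.support.card *
        Module.finrank F (Submodule.span F
          (Set.range fun α : G => MonoidAlgebra.coeffLinearEquiv F
            (Representation.ofMulAction F G X α ((MonoidAlgebra.coeffLinearEquiv F).symm f))))
      ≥ Fintype.card X := by
  classical
  set s := univ.image fun g : G => f.mapDomain (g • ·)
  have hrange : (Set.range fun g : G => MonoidAlgebra.coeffLinearEquiv F
      (Representation.ofMulAction F G X g ((MonoidAlgebra.coeffLinearEquiv F).symm f))) = s := by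
    simp only [Representation.coeffLinearEquiv_ofMulAction_apply, s, coe_image, coe_univ,
      Set.image_univ]
  have hcover : s.biUnion Finsupp.support = univ := by
    refine eq_univ_of_forall fun x => ?_
    obtain ⟨g, hg⟩ := Finsupp.exists_mem_support_mapDomain_smul (G := G) hf x
    exact mem_biUnion.2 ⟨_, mem_image_of_mem _ (mem_univ g), hg⟩
  have hsupp : ∀ v ∈ s, #v.support ≤ #f.support := by
    simp only [s, mem_image, mem_univ, true_and, forall_exists_index, forall_apply_eq_imp_iff]
    exact fun g => (Finsupp.card_support_mapDomain_of_injective (MulAction.injective g) f).le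
  rw [ge_iff_le, hrange, mul_comm, ← card_univ, ← hcover]
  exact Finsupp.card_biUnion_support_le_finrank_mul s hsupp
end

section
/- Let F be any field, G any finite group, f a nonzero element of the group algebra F G, and F G·f the left ideal generated by f. Then |supp(f)| · dim_F (F G·f) ≥ |G| + |supp(f)| − |G_{supp(f)}|, where supp(f) = {α ∈ G : f(α) ≠ 0} (writing f = Σ_{α∈G} f(α)·α) and G_{supp(f)} = {α ∈ G : supp(f)·α = supp(f)} is the right stabilizer of supp(f). -/
/-!
Write `S = supp f` and `H = G_S`. Among the left translates `g f`, which span `F G·f` and have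
supports `gS`, choose a basis `B` of their span. The supports of `B` cover `G`. Call a point
private to `w ∈ B` if `w` is the only element of `B` whose support contains it. At such a point
every translate takes the value `c_w · w(x)`, so all points private to `w` lie in exactly the
same sets `gS`; this puts them in a single left coset of `H`. Counting incidences, every point is
covered twice unless it is private, so `2|G| ≤ |B| (|S| + |H|)`, and `|H| ≤ |S| ≤ |G|` turns this
into the claim.
-/

open Finset Module Submodule
open scoped Pointwise

section PrivatePart

variable {ι X : Type*} [DecidableEq X]

theorem sum_card_eq_sum_card_filter_mem [Fintype X] (B : Finset ι) (t : ι → Finset X) :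
    ∑ i ∈ B, #(t i) = ∑ x, #{i ∈ B | x ∈ t i} := by
  simpa [bipartiteAbove, bipartiteBelow] using
    sum_card_bipartiteAbove_eq_sum_card_bipartiteBelow (fun i x => x ∈ t i) (s := B) (t := univ)

variable [DecidableEq ι]

def privatePart (B : Finset ι) (t : ι → Finset X) (i : ι) : Finset X :=
  {x ∈ t i | ∀ j ∈ B, x ∈ t j → j = i}

theorem two_mul_card_le_sum_card_add_sum_card_privatePart [Fintype X] {B : Finset ι}
    {t : ι → Finset X} (hcover : ∀ x, ∃ i ∈ B, x ∈ t i) :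
    2 * Fintype.card X ≤ ∑ i ∈ B, #(t i) + ∑ i ∈ B, #(privatePart B t i) := by
  rw [sum_card_eq_sum_card_filter_mem B t, sum_card_eq_sum_card_filter_mem B (privatePart B t),
    ← sum_add_distrib, mul_comm, ← smul_eq_mul, ← card_univ, ← sum_const]
  refine sum_le_sum fun x _ => ?_
  obtain ⟨i, hi, hxi⟩ := hcover x
  have hcovered : 0 < #{j ∈ B | x ∈ t j} := card_pos.2 ⟨i, mem_filter.2 ⟨hi, hxi⟩⟩
  by_cases hpriv : x ∈ privatePart B t i
  · have : 0 < #{j ∈ B | x ∈ privatePart B t j} := card_pos.2 ⟨i, mem_filter.2 ⟨hi, hpriv⟩⟩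
    omega
  · obtain ⟨j, hj, hxj, hji⟩ : ∃ j ∈ B, x ∈ t j ∧ j ≠ i := by
      simpa [privatePart, hxi] using hpriv
    have : 1 < #{j ∈ B | x ∈ t j} :=
      one_lt_card.2 ⟨j, mem_filter.2 ⟨hj, hxj⟩, i, mem_filter.2 ⟨hi, hxi⟩, hji⟩
    omega

end PrivatePart

namespace Finsupp

variable {X F : Type*} [Field F] {B : Finset (X →₀ F)} {v : X →₀ F}

theorem exists_apply_eq_mul_of_mem_span (hv : v ∈ span F (B : Set (X →₀ F))) (w : X →₀ F) :
    ∃ c : F, ∀ x, (∀ u ∈ B, u ≠ w → u x = 0) → v x = c * w x := by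
  obtain ⟨c, hcB, rfl⟩ := mem_span_finset.1 hv
  refine ⟨c w, fun x hx => ?_⟩
  rw [finsetSum_apply, Finset.sum_eq_single w (fun u hu huw => by simp [hx u hu huw])
    (fun hw => by simp [Function.notMem_support.1 fun h => hw (hcB h)])]
  simp

theorem exists_mem_support_of_mem_span (hv : v ∈ span F (B : Set (X →₀ F))) {x : X}
    (hx : x ∈ v.support) : ∃ u ∈ B, x ∈ u.support := by
  by_contra! h
  obtain ⟨c, hc⟩ := exists_apply_eq_mul_of_mem_span hv 0
  exact mem_support_iff.1 hx (by simpa using hc x fun u hu _ => notMem_support_iff.1 (h u hu))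

theorem mem_support_iff_of_mem_privatePart [DecidableEq X] [DecidableEq (X →₀ F)]
    (hv : v ∈ span F (B : Set (X →₀ F))) {w : X →₀ F} {p q : X}
    (hp : p ∈ privatePart B support w) (hq : q ∈ privatePart B support w) :
    p ∈ v.support ↔ q ∈ v.support := by
  obtain ⟨c, hc⟩ := exists_apply_eq_mul_of_mem_span hv w
  have hvalue : ∀ x ∈ privatePart B support w, v x = c * w x ∧ w x ≠ 0 := fun x hx => by
    obtain ⟨hxw, hxB⟩ := mem_filter.1 hx
    exact ⟨hc x fun u hu huw => notMem_support_iff.1 fun hxu => huw (hxB u hu hxu),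
      mem_support_iff.1 hxw⟩
  obtain ⟨hvp, hwp⟩ := hvalue p hp
  obtain ⟨hvq, hwq⟩ := hvalue q hq
  simp [mem_support_iff, hvp, hvq, hwp, hwq]

end Finsupp

section RightStabilizer

variable {G : Type*} [Group G]

def rightStabilizer (S : Set G) : Set G :=
  {α | (fun β => β * α) '' S = S}

theorem inv_mul_mem_rightStabilizer {S : Set G} {p q : G} (h : ∀ g, g * p ∈ S ↔ g * q ∈ S) :
    q⁻¹ * p ∈ rightStabilizer S := by
  refine Set.Subset.antisymm ?_ fun s hs => ⟨s * p⁻¹ * q, ?_, by group⟩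
  · rintro _ ⟨s, hs, rfl⟩
    simpa [mul_assoc] using (h (s * q⁻¹)).2 (by simpa using hs)
  · simpa [mul_assoc] using (h (s * p⁻¹)).1 (by simpa using hs)

theorem ncard_le_ncard_rightStabilizer [Finite G] {S P : Set G}
    (hP : ∀ p ∈ P, ∀ q ∈ P, ∀ g, g * p ∈ S ↔ g * q ∈ S) :
    P.ncard ≤ (rightStabilizer S).ncard := by
  rcases P.eq_empty_or_nonempty with rfl | ⟨q, hq⟩
  · simp
  calc P.ncard ≤ (q • rightStabilizer S).ncard :=
        Set.ncard_le_ncard (fun p hp => Set.mem_smul_set.2 ⟨q⁻¹ * p,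
          inv_mul_mem_rightStabilizer (hP p hp q hq), by simp⟩) (Set.toFinite _)
    _ = (rightStabilizer S).ncard := Set.ncard_smul_set q _

theorem ncard_rightStabilizer_le [Finite G] {S : Set G} (hS : S.Nonempty) :
    (rightStabilizer S).ncard ≤ S.ncard := by
  obtain ⟨s, hs⟩ := hS
  calc (rightStabilizer S).ncard = (s • rightStabilizer S).ncard := (Set.ncard_smul_set s _).symm
    _ ≤ S.ncard := Set.ncard_le_ncard (fun _ ⟨α, hα, hsα⟩ => hsα ▸ hα.subset ⟨s, hs, rfl⟩)
        (Set.toFinite _)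

@[simp]
theorem rightStabilizer_empty : rightStabilizer (∅ : Set G) = Set.univ := by
  simp [rightStabilizer]

end RightStabilizer

-- For `k ≥ 2` this is `(k - 2) (s - h) ≥ 0`; for `k ≤ 1` the hypothesis forces `s = h = n`.
theorem add_le_mul_add_of_two_mul_le_mul_add {n s h k : ℕ} (hhs : h ≤ s) (hsn : s ≤ n)
    (hcount : 2 * n ≤ k * (s + h)) : n + s ≤ s * k + h := by
  rcases Nat.lt_or_ge k 2 with hk | hk
  · interval_cases k <;> omega
  · nlinarith

namespace Finsupp

variable {G F : Type*} [Group G] [Field F]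

def leftTranslates (f : G →₀ F) : Set (G →₀ F) :=
  Set.range fun g => f.equivMapDomain (Equiv.mulLeft g)

theorem equivMapDomain_mulLeft_apply (f : G →₀ F) (g x : G) :
    f.equivMapDomain (Equiv.mulLeft g) x = f (g⁻¹ * x) :=
  rfl

theorem card_support_equivMapDomain {α β M : Type*} [Zero M] (e : α ≃ β) (l : α →₀ M) :
    #(l.equivMapDomain e).support = #l.support :=
  card_map _

theorem two_mul_card_le_of_leftTranslates_mem_span [Fintype G] [DecidableEq G]
    [DecidableEq (G →₀ F)] {f : G →₀ F} (hf : f ≠ 0) {B : Finset (G →₀ F)}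
    (hBT : (B : Set (G →₀ F)) ⊆ leftTranslates f)
    (hTB : ∀ g, f.equivMapDomain (Equiv.mulLeft g) ∈ span F (B : Set (G →₀ F))) :
    2 * Fintype.card G ≤ #B * (#f.support + (rightStabilizer (f.support : Set G)).ncard) := by
  obtain ⟨s, hs⟩ := support_nonempty_iff.2 hf
  have hcover : ∀ x, ∃ u ∈ B, x ∈ u.support := fun x =>
    exists_mem_support_of_mem_span (hTB (x * s⁻¹)) <| by
      rw [mem_support_iff, equivMapDomain_mulLeft_apply]
      simpa using hs
  have hsupport : ∀ u ∈ B, #u.support = #f.support := fun u hu => by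
    obtain ⟨g, rfl⟩ := hBT hu
    exact card_support_equivMapDomain _ _
  have hprivate : ∀ u ∈ B,
      #(privatePart B support u) ≤ (rightStabilizer (f.support : Set G)).ncard := fun u _ => by
    rw [← Set.ncard_coe_finset]
    refine ncard_le_ncard_rightStabilizer fun p hp q hq g => ?_
    simpa [equivMapDomain_mulLeft_apply] using
      mem_support_iff_of_mem_privatePart (hTB g⁻¹) hp hq
  calc 2 * Fintype.card G
      ≤ ∑ u ∈ B, #u.support + ∑ u ∈ B, #(privatePart B support u) :=
        two_mul_card_le_sum_card_add_sum_card_privatePart hcover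
    _ ≤ ∑ u ∈ B, #f.support + ∑ u ∈ B, (rightStabilizer (f.support : Set G)).ncard :=
        add_le_add (Finset.sum_congr rfl hsupport).le (Finset.sum_le_sum hprivate)
    _ = _ := by simp [mul_add]

theorem card_add_card_support_le_mul_finrank_span_leftTranslates [Fintype G] (f : G →₀ F) :
    Fintype.card G + #f.support ≤
      #f.support * finrank F (span F (leftTranslates f)) +
        (rightStabilizer (f.support : Set G)).ncard := by
  classical
  obtain rfl | hf := eq_or_ne f 0
  · simp [Set.ncard_univ]
  obtain ⟨b, hbT, hspan, hli⟩ := exists_linearIndependent F (leftTranslates f)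
  set B := ((Set.finite_range _).subset hbT).toFinset
  have hB : (B : Set (G →₀ F)) = b := Set.Finite.coe_toFinset _
  rw [← hspan, ← hB, finrank_span_finset_eq_card (by rwa [hB])]
  refine add_le_mul_add_of_two_mul_le_mul_add ?_ (card_le_univ f.support) ?_
  · simpa using ncard_rightStabilizer_le (Finset.coe_nonempty.2 (support_nonempty_iff.2 hf))
  · refine two_mul_card_le_of_leftTranslates_mem_span hf (hB ▸ hbT) fun g => ?_
    rw [hB, hspan]
    exact subset_span ⟨g, rfl⟩

end Finsupp

theorem stmt12_general {G F : Type*} [Group G] [Fintype G] [Field F]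
    (f : MonoidAlgebra F G) :
    f.coeff.support.card *
        Module.finrank F
          ((Submodule.span (MonoidAlgebra F G) {f}).restrictScalars F) +
      {α : G | (fun β => β * α) '' (↑f.coeff.support : Set G) = ↑f.coeff.support}.ncard
      ≥ Fintype.card G + f.coeff.support.card := by
  have htranslates : span F (Finsupp.leftTranslates f.coeff) ≤
      ((span (MonoidAlgebra F G) {f}).restrictScalars F).map
        (MonoidAlgebra.coeffLinearEquiv (S := F) (M := G) F).toLinearMap := by
    rw [span_le]
    rintro _ ⟨g, rfl⟩
    exact ⟨MonoidAlgebra.single g 1 * f, smul_mem _ _ (mem_span_singleton_self f), by ext; simp⟩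
  have hfinrank := (finrank_mono htranslates).trans_eq (LinearEquiv.finrank_map_eq _ _)
  exact (Finsupp.card_add_card_support_le_mul_finrank_span_leftTranslates f.coeff).trans
    (Nat.add_le_add_right (Nat.mul_le_mul_left _ hfinrank) _)

theorem stmt12 {G F : Type*} [Group G] [Fintype G] [Field F]
    (f : MonoidAlgebra F G) (hf : f ≠ 0) :
    f.coeff.support.card *
        Module.finrank F
          ((Submodule.span (MonoidAlgebra F G) {f}).restrictScalars F) +
      {α : G | (fun β => β * α) '' (↑f.coeff.support : Set G) = ↑f.coeff.support}.ncard
      ≥ Fintype.card G + f.coeff.support.card :=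
  stmt12_general f
end

section
/- Let F be any field, G any finite group, f a nonzero element of the group algebra F G. Then |supp(f)| · dim_F (F G·f) = |G| if and only if supp(f) = γH is a left coset of a subgroup H ≤ G and there exist a group homomorphism η: H → Fˣ and c ∈ Fˣ such that f(γβ) = c·η(β) for all β ∈ H. -/
/-!
Write `S = supp f`, `d = dim_F (F G·f)` and let `K` be the group of those `k` for which
`x ↦ f (k x)` is a nonzero multiple of `f`. Evaluation at some `d` points `X ⊆ G` is injective on
`F G·f`; as every translate of `f` is a nonzero element of the ideal, the sets `S x⁻¹` (`x ∈ X`)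
cover `G`, whence `|G| ≤ |S| d`. On the other hand `F G·f` is spanned by the `r·f` with `r` running
over representatives of `G/K`, whence `|K| d ≤ |G|`.

If `|S| d = |G|`, the cover is a partition, so `X ∩ S = {x₀}`, and whenever `f (k x₀) ≠ 0` the
element `f(x₀)·(x ↦ f (k x)) - f(k x₀)·f` of the ideal vanishes on `X`, hence is zero: `S x₀⁻¹ ⊆ K`.
So `|S| d = |G|` iff `|S| ≤ |K|`. Since `K S = S`, the latter says that `S = K γ = γ (γ⁻¹ K γ)` is a
single coset, and then `β ↦ f (γ β) / f γ` is a character of `γ⁻¹ K γ`.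
-/

open Pointwise Module MonoidAlgebra

theorem exists_finset_card_le_finrank_forall_eq_zero {ι K V : Type*} [Field K] [AddCommGroup V]
    [Module K V] [FiniteDimensional K V] (ε : ι → Dual K V)
    (hε : ∀ v, (∀ i, ε i v = 0) → v = 0) :
    ∃ s : Finset ι, s.card ≤ finrank K V ∧ ∀ v, (∀ i ∈ s, ε i v = 0) → v = 0 := by
  classical
  have hspan : Submodule.span K (Set.range ε) = ⊤ :=
    Submodule.span_eq_top_of_ne_zero fun v hv => by
      by_contra! h
      exact hv (hε v fun i => h _ ⟨i, rfl⟩)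
  obtain ⟨κ, a, -, hspan', hli⟩ := exists_linearIndependent' K ε
  have := hli.finite
  have := Fintype.ofFinite κ
  refine ⟨Finset.univ.image a, Finset.card_image_le.trans ?_, fun v hv => ?_⟩
  · exact hli.fintype_card_le_finrank.trans Subspace.dual_finrank_eq.le
  · refine (forall_dual_apply_eq_zero_iff K v).1 fun φ => ?_
    have hle : Submodule.span K (Set.range (ε ∘ a)) ≤ LinearMap.ker (Dual.eval K V v) :=
      Submodule.span_le.2 <| by
        rintro _ ⟨k, rfl⟩
        exact hv _ (Finset.mem_image_of_mem a (Finset.mem_univ k))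
    rw [hspan', hspan] at hle
    exact hle Submodule.mem_top

section LineStabilizer

variable {G F : Type*} [Group G] [Field F]

/-- The stabilizer of the line `F φ` under left translation of functions on `G`. -/
def lineStabilizer (φ : G → F) : Subgroup G where
  carrier := {k | ∃ c : Fˣ, ∀ y, φ (k * y) = c * φ y}
  one_mem' := ⟨1, by simp⟩
  mul_mem' := by
    rintro a b ⟨c, hc⟩ ⟨d, hd⟩
    exact ⟨c * d, fun y => by rw [mul_assoc, hc, hd, Units.val_mul, mul_assoc]⟩
  inv_mem' := by
    rintro a ⟨c, hc⟩
    refine ⟨c⁻¹, fun y => ?_⟩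
    have h := hc (a⁻¹ * y)
    rw [mul_inv_cancel_left] at h
    rw [h, Units.inv_mul_cancel_left]

theorem apply_mul_ne_zero_iff {φ : G → F} {k : G} (hk : k ∈ lineStabilizer φ) (y : G) :
    φ (k * y) ≠ 0 ↔ φ y ≠ 0 := by
  obtain ⟨c, hc⟩ := hk
  rw [hc, mul_ne_zero_iff, and_iff_right c.ne_zero]

theorem apply_mul_mul_apply_comm {φ : G → F} {k : G} (hk : k ∈ lineStabilizer φ) (y z : G) :
    φ (k * y) * φ z = φ (k * z) * φ y := by
  obtain ⟨c, hc⟩ := hk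
  rw [hc, hc]
  ring

theorem support_eq_image_mul_of_card_support_le {φ : G →₀ F} {γ : G} (hγ : γ ∈ φ.support)
    (hcard : φ.support.card ≤ Nat.card (lineStabilizer φ)) :
    (φ.support : Set G) = (· * γ⁻¹) ⁻¹' (lineStabilizer φ : Set G) := by
  rw [← Set.image_mul_right]
  refine (Set.eq_of_subset_of_ncard_le ?_ ?_ (Finset.finite_toSet _)).symm
  · rintro _ ⟨k, hk, rfl⟩
    exact Finsupp.mem_support_iff.2
      ((apply_mul_ne_zero_iff hk γ).2 (Finsupp.mem_support_iff.1 hγ))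
  · rw [Set.ncard_image_of_injective _ (mul_left_injective γ), Set.ncard_coe_finset,
      ← Nat.card_coe_set_eq]
    exact hcard

theorem exists_character_of_card_support_le {φ : G →₀ F} (hφ : φ ≠ 0)
    (hcard : φ.support.card ≤ Nat.card (lineStabilizer φ)) :
    ∃ (H : Subgroup G) (γ : G) (η : H →* Fˣ) (c : Fˣ),
      (φ.support : Set G) = γ • (H : Set G) ∧ ∀ β : H, φ (γ * β) = (c : F) * (η β : F) := by
  obtain ⟨γ, hγ⟩ := Finsupp.support_nonempty_iff.2 hφ
  have hφγ : φ γ ≠ 0 := Finsupp.mem_support_iff.1 hγ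
  set H := (lineStabilizer φ).comap (MulAut.conj γ).toMonoidHom
  have hconj (β : H) : γ * β * γ⁻¹ ∈ lineStabilizer φ := β.2
  have hne (β : H) : φ (γ * β) ≠ 0 := by
    simpa using (apply_mul_ne_zero_iff (hconj β) γ).2 hφγ
  let η : H →* Fˣ :=
    MonoidHom.mk' (fun β => Units.mk0 (φ (γ * β) / φ γ) (div_ne_zero (hne β) hφγ)) fun β β' => by
      have h := apply_mul_mul_apply_comm (hconj β) (γ * β') γ
      simp only [mul_assoc, inv_mul_cancel_left, inv_mul_cancel, mul_one] at h
      ext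
      simp only [Subgroup.coe_mul, Units.val_mk0, Units.val_mul]
      field_simp
      linear_combination h
  refine ⟨H, γ, η, Units.mk0 (φ γ) hφγ, ?_, fun β => ?_⟩
  · rw [support_eq_image_mul_of_card_support_le hγ hcard]
    ext y
    simp [Set.mem_smul_set_iff_inv_smul_mem, H, MulAut.conj_apply]
  · simp only [η, MonoidHom.mk'_apply, Units.val_mk0]
    field_simp

theorem conj_mem_lineStabilizer {φ : G →₀ F} {H : Subgroup G} {γ : G} {η : H →* Fˣ} {c : Fˣ}
    (hsupp : (φ.support : Set G) = γ • (H : Set G))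
    (hval : ∀ β : H, φ (γ * β) = (c : F) * (η β : F)) (β : H) :
    γ * β * γ⁻¹ ∈ lineStabilizer φ := by
  have hmem (y : G) : φ y ≠ 0 ↔ γ⁻¹ * y ∈ H := by
    rw [← Finsupp.mem_support_iff, ← Finset.mem_coe, hsupp, Set.mem_smul_set_iff_inv_smul_mem]
    rfl
  refine ⟨η β, fun y => ?_⟩
  by_cases hy : γ⁻¹ * y ∈ H
  · obtain ⟨β', rfl⟩ : ∃ β' : H, γ * β' = y := ⟨⟨_, hy⟩, mul_inv_cancel_left γ y⟩
    rw [show γ * β * γ⁻¹ * (γ * β') = γ * ↑(β * β') by simp [mul_assoc], hval, hval, map_mul,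
      Units.val_mul]
    ring
  · have h : γ⁻¹ * (γ * β * γ⁻¹ * y) ∉ H := by
      rwa [show γ⁻¹ * (γ * β * γ⁻¹ * y) = β * (γ⁻¹ * y) by group, H.mul_mem_cancel_left β.2]
    rw [not_not.1 (mt (hmem _).1 h), not_not.1 (mt (hmem y).1 hy), mul_zero]

theorem card_support_le_card_lineStabilizer_iff [Finite G] {φ : G →₀ F} (hφ : φ ≠ 0) :
    φ.support.card ≤ Nat.card (lineStabilizer φ) ↔
      ∃ (H : Subgroup G) (γ : G) (η : H →* Fˣ) (c : Fˣ),
        (φ.support : Set G) = γ • (H : Set G) ∧ ∀ β : H, φ (γ * β) = (c : F) * (η β : F) := by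
  refine ⟨exists_character_of_card_support_le hφ, fun ⟨H, γ, η, c, hsupp, hval⟩ => ?_⟩
  rw [← Set.ncard_coe_finset, ← Nat.card_coe_set_eq]
  refine Set.ncard_le_ncard_of_injOn (· * γ⁻¹) (fun s hs => ?_) (mul_left_injective _).injOn
    (Set.toFinite _)
  rw [hsupp, Set.mem_smul_set_iff_inv_smul_mem] at hs
  simpa [mul_assoc] using conj_mem_lineStabilizer hsupp hval ⟨_, hs⟩

end LineStabilizer

section Combinatorics

variable {G : Type*} [Group G] [Fintype G] [DecidableEq G] {S X : Finset G}

theorem mul_inv_eq_univ_of_forall_exists_mul_mem (h : ∀ k, ∃ x ∈ X, k * x ∈ S) :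
    S * X⁻¹ = Finset.univ :=
  Finset.eq_univ_of_forall fun k => by
    obtain ⟨x, hx, hkx⟩ := h k
    exact Finset.mem_mul.2 ⟨k * x, hkx, x⁻¹, Finset.inv_mem_inv hx, mul_inv_cancel_right k x⟩

theorem card_le_card_mul_card_of_forall_exists_mul_mem (h : ∀ k, ∃ x ∈ X, k * x ∈ S) :
    Fintype.card G ≤ S.card * X.card := by
  rw [← Finset.card_univ, ← mul_inv_eq_univ_of_forall_exists_mul_mem h, ← Finset.card_inv X]
  exact Finset.card_mul_le

theorem eq_of_mul_mem_of_card_mul_card_le (h : ∀ k, ∃ x ∈ X, k * x ∈ S)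
    (hcard : S.card * X.card ≤ Fintype.card G) {k x x' : G} (hx : x ∈ X) (hx' : x' ∈ X)
    (hkx : k * x ∈ S) (hkx' : k * x' ∈ S) : x = x' := by
  have hinj : Set.InjOn (fun p => p.1 * p.2) ((S : Set G) ×ˢ (X⁻¹ : Finset G)) := by
    refine Finset.card_mul_iff.1 (le_antisymm Finset.card_mul_le ?_)
    rw [mul_inv_eq_univ_of_forall_exists_mul_mem h, Finset.card_inv, Finset.card_univ]
    exact hcard
  simpa using hinj (x₁ := (k * x, x⁻¹)) (x₂ := (k * x', x'⁻¹)) ⟨hkx, Finset.inv_mem_inv hx⟩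
    ⟨hkx', Finset.inv_mem_inv hx'⟩ (by simp)

end Combinatorics

section GroupAlgebra

theorem coeff_of_mul_apply {G R : Type*} [Group G] [Semiring R] (f : MonoidAlgebra R G)
    (g x : G) : (of R G g * f).coeff x = f.coeff (g⁻¹ * x) := by
  rw [of_apply, coeff_single_mul_apply, one_mul]

theorem of_mul_ne_zero {G R : Type*} [Group G] [Semiring R] {f : MonoidAlgebra R G} (hf : f ≠ 0)
    (g : G) : of R G g * f ≠ 0 :=
  ((Group.isUnit g).map (of R G)).mul_right_eq_zero.not.2 hf

variable {G F : Type*} [Group G] [Field F]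

theorem exists_finset_card_le_finrank_forall_coeff_eq_zero [Fintype G]
    (W : Submodule F (MonoidAlgebra F G)) :
    ∃ X : Finset G, X.card ≤ finrank F W ∧ ∀ v ∈ W, (∀ x ∈ X, v.coeff x = 0) → v = 0 := by
  obtain ⟨X, hXcard, hX⟩ := exists_finset_card_le_finrank_forall_eq_zero
    (fun x => (Finsupp.lapply x ∘ₗ (coeffLinearEquiv F).toLinearMap) ∘ₗ W.subtype)
    fun v hv => Subtype.ext (MonoidAlgebra.ext (Finsupp.ext hv))
  exact ⟨X, hXcard, fun v hv hvX => congrArg Subtype.val (hX ⟨v, hv⟩ hvX)⟩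

variable {I : Submodule (MonoidAlgebra F G) (MonoidAlgebra F G)} {f : MonoidAlgebra F G}
  {X : Finset G}

theorem exists_coeff_mul_ne_zero (hX : ∀ v ∈ I, (∀ x ∈ X, v.coeff x = 0) → v = 0)
    (hf : f ≠ 0) (hfI : f ∈ I) (k : G) : ∃ x ∈ X, f.coeff (k * x) ≠ 0 := by
  by_contra! h
  refine of_mul_ne_zero hf k⁻¹ (hX _ (I.smul_mem _ hfI) fun x hx => ?_)
  rw [coeff_of_mul_apply, inv_inv, h x hx]

theorem card_le_card_support_mul_finrank [Fintype G] (hf : f ≠ 0) (hfI : f ∈ I) :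
    Fintype.card G ≤ f.coeff.support.card * finrank F (I.restrictScalars F) := by
  classical
  obtain ⟨X, hXcard, hX⟩ :=
    exists_finset_card_le_finrank_forall_coeff_eq_zero (I.restrictScalars F)
  refine (card_le_card_mul_card_of_forall_exists_mul_mem fun k => ?_).trans
    (Nat.mul_le_mul_left _ hXcard)
  simpa only [Finsupp.mem_support_iff] using exists_coeff_mul_ne_zero hX hf hfI k

theorem mem_lineStabilizer_of_coeff_mul_ne_zero (hX : ∀ v ∈ I, (∀ x ∈ X, v.coeff x = 0) → v = 0)
    (hfI : f ∈ I)
    (huniq : ∀ k, ∀ x ∈ X, ∀ x' ∈ X, f.coeff (k * x) ≠ 0 → f.coeff (k * x') ≠ 0 → x = x')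
    {x₀ k : G} (hx₀ : x₀ ∈ X) (hfx₀ : f.coeff x₀ ≠ 0) (hk : f.coeff (k * x₀) ≠ 0) :
    k ∈ lineStabilizer f.coeff := by
  have hv : f.coeff x₀ • (of F G k⁻¹ * f) - f.coeff (k * x₀) • f = 0 := by
    refine hX _ (I.sub_mem (I.smul_of_tower_mem _ (I.smul_mem _ hfI))
      (I.smul_of_tower_mem _ hfI)) fun x hx => ?_
    simp only [coeff_sub, Finsupp.sub_apply, coeff_smul_apply, coeff_of_mul_apply, inv_inv,
      smul_eq_mul]
    rcases eq_or_ne x x₀ with rfl | hne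
    · ring
    have hkx : f.coeff (k * x) = 0 := by
      by_contra h
      exact hne (huniq k x hx x₀ hx₀ h hk)
    have hx : f.coeff x = 0 := by
      by_contra h
      exact hne (huniq 1 x hx x₀ hx₀ (by rwa [one_mul]) (by rwa [one_mul]))
    rw [hkx, hx, mul_zero, mul_zero, sub_zero]
  refine ⟨Units.mk0 (f.coeff (k * x₀) / f.coeff x₀) (div_ne_zero hk hfx₀), fun y => ?_⟩
  have hy := congrArg (fun v => v.coeff y) hv
  simp only [coeff_sub, Finsupp.sub_apply, coeff_smul_apply, coeff_of_mul_apply, inv_inv,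
    smul_eq_mul, coeff_zero, Finsupp.coe_zero, Pi.zero_apply] at hy
  rw [Units.val_mk0]
  field_simp
  linear_combination hy

theorem card_support_le_card_lineStabilizer_of_mul_finrank_eq [Fintype G] (hf : f ≠ 0)
    (hfI : f ∈ I)
    (h : f.coeff.support.card * finrank F (I.restrictScalars F) = Fintype.card G) :
    f.coeff.support.card ≤ Nat.card (lineStabilizer f.coeff) := by
  classical
  obtain ⟨X, hXcard, hX⟩ :=
    exists_finset_card_le_finrank_forall_coeff_eq_zero (I.restrictScalars F)
  have hcover := exists_coeff_mul_ne_zero hX hf hfI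
  have huniq :
      ∀ k, ∀ x ∈ X, ∀ x' ∈ X, f.coeff (k * x) ≠ 0 → f.coeff (k * x') ≠ 0 → x = x' := by
    simp only [← Finsupp.mem_support_iff] at hcover ⊢
    exact fun k x hx x' hx' => eq_of_mul_mem_of_card_mul_card_le hcover
      (h ▸ Nat.mul_le_mul_left _ hXcard) hx hx'
  obtain ⟨x₀, hx₀, hfx₀⟩ := hcover 1
  rw [one_mul] at hfx₀
  rw [← Set.ncard_coe_finset, ← Nat.card_coe_set_eq]
  refine Set.ncard_le_ncard_of_injOn (· * x₀⁻¹) (fun s hs => ?_) (mul_left_injective _).injOn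
    (Set.toFinite _)
  refine mem_lineStabilizer_of_coeff_mul_ne_zero hX hfI huniq hx₀ hfx₀ ?_
  rwa [inv_mul_cancel_right, ← Finsupp.mem_support_iff]

theorem card_lineStabilizer_mul_finrank_span_le [Fintype G] (f : MonoidAlgebra F G) :
    Nat.card (lineStabilizer f.coeff) *
        finrank F ((Submodule.span (MonoidAlgebra F G) {f}).restrictScalars F) ≤
      Fintype.card G := by
  classical
  set K := lineStabilizer f.coeff
  have hsmul (k : G) (hk : k ∈ K) : ∃ c : F, of F G k * f = c • f := by
    obtain ⟨c, hc⟩ := K.inv_mem hk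
    exact ⟨c, MonoidAlgebra.ext (Finsupp.ext fun y => by
      rw [coeff_of_mul_apply, hc, coeff_smul_apply, smul_eq_mul])⟩
  let u : G ⧸ K → MonoidAlgebra F G := fun q => of F G q.out * f
  have hle : (Submodule.span (MonoidAlgebra F G) {f}).restrictScalars F ≤
      Submodule.span F (Set.range u) := by
    intro v hv
    obtain ⟨a, rfl⟩ := Submodule.mem_span_singleton.1 hv
    clear hv
    induction a using MonoidAlgebra.induction_on with
    | of g =>
      obtain ⟨k, hk⟩ := QuotientGroup.mk_out_eq_mul K g
      obtain ⟨c, hc⟩ := hsmul _ (K.inv_mem k.2)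
      have hg : of F G g = of F G (g : G ⧸ K).out * of F G (k : G)⁻¹ := by
        rw [← map_mul, hk, mul_inv_cancel_right]
      rw [smul_eq_mul, hg, mul_assoc, hc, mul_smul_comm]
      exact Submodule.smul_mem _ _ (Submodule.subset_span ⟨_, rfl⟩)
    | add a b ha hb => rw [add_smul]; exact Submodule.add_mem _ ha hb
    | smul r a ha => rw [smul_assoc]; exact Submodule.smul_mem _ r ha
  calc Nat.card K * finrank F ((Submodule.span (MonoidAlgebra F G) {f}).restrictScalars F)
      ≤ Nat.card K * Nat.card (G ⧸ K) :=
        Nat.mul_le_mul_left _ <| (Submodule.finrank_mono hle).trans <|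
          (finrank_range_le_card u).trans_eq Nat.card_eq_fintype_card.symm
    _ = Fintype.card G := by
      rw [mul_comm, ← Subgroup.card_eq_card_quotient_mul_card_subgroup, Nat.card_eq_fintype_card]

end GroupAlgebra

theorem stmt13 {G F : Type*} [Group G] [Fintype G] [Field F]
    (f : MonoidAlgebra F G) (hf : f ≠ 0) :
    f.coeff.support.card *
        Module.finrank F
          ((Submodule.span (MonoidAlgebra F G) {f}).restrictScalars F)
      = Fintype.card G ↔
    ∃ (H : Subgroup G) (γ : G) (η : H →* Fˣ) (c : Fˣ),
      (f.coeff.support : Set G) = γ • (H : Set G) ∧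
      ∀ β : H, f.coeff (γ * β) = (c : F) * (η β : F) := by
  have hfI := Submodule.mem_span_singleton_self (R := MonoidAlgebra F G) f
  rw [← card_support_le_card_lineStabilizer_iff (coeff_eq_zero.not.2 hf)]
  refine ⟨card_support_le_card_lineStabilizer_of_mul_finrank_eq hf hfI, fun h => ?_⟩
  exact le_antisymm
    ((Nat.mul_le_mul_right _ h).trans (card_lineStabilizer_mul_finrank_span_le f))
    (card_le_card_support_mul_finrank hf hfI)
end
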